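/- arXiv:2307.14893 — 7 statements merged into one kernel-verified Lean document; each statement's English description precedes it below -/
import Mathlib

section
/- For every k ∈ ℕ, every formula φ of the epistemic language L, every vocabulary profile Γ = (Γ_i)_{i∈Agt} with each Γ_i a finite subset of L0, and every state S ∈ 𝐒_Γ: (S, 𝐒_Γ) ⊨ φ if and only if the valuation val_S(X_k) satisfies tr_k(φ). -/
/-- The language L0 of explicit belief: α ::= p | ¬α | α ∧ α | △_i α. -/
inductive L0 (Atm Agt : Type) : Type
  | atom : Atm → L0 Atm Agt
  | neg  : L0 Atm Agt → L0 Atm Agt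
  | conj : L0 Atm Agt → L0 Atm Agt → L0 Atm Agt
  | bel  : Agt → L0 Atm Agt → L0 Atm Agt
  deriving DecidableEq

/-- A state: one belief base per agent and a set of true atoms. -/
structure State (Atm Agt : Type) where
  B : Agt → Set (L0 Atm Agt)
  V : Set Atm

variable {Atm Agt : Type}

/-- Satisfaction of L0-formulas at a state. -/
def sat0 (S : State Atm Agt) : L0 Atm Agt → Prop
  | .atom p => p ∈ S.V
  | .neg a => ¬ sat0 S a
  | .conj a b => sat0 S a ∧ sat0 S b
  | .bel i a => a ∈ S.B i

/-- The epistemic relation R_i: S R_i S' iff S' satisfies every formula of agent i's base at S. -/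
def epRel (i : Agt) (S S' : State Atm Agt) : Prop :=
  ∀ a ∈ S.B i, sat0 S' a

/-- 𝐒_Γ : the states whose belief bases are included in the vocabulary profile Γ. -/
def SGamma (Γ : Agt → Set (L0 Atm Agt)) : Set (State Atm Agt) :=
  {S | ∀ i, S.B i ⊆ Γ i}

/-- The language L: φ ::= α | ¬φ | φ ∧ φ | □_i φ | □^o_i φ. -/
inductive LFm (Atm Agt : Type) : Type
  | base : L0 Atm Agt → LFm Atm Agt
  | neg  : LFm Atm Agt → LFm Atm Agt
  | conj : LFm Atm Agt → LFm Atm Agt → LFm Atm Agt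
  | box  : Agt → LFm Atm Agt → LFm Atm Agt
  | boxo : Agt → LFm Atm Agt → LFm Atm Agt

/-- Satisfaction of L-formulas in a model (S, Cxt). -/
def satL (Cxt : Set (State Atm Agt)) : State Atm Agt → LFm Atm Agt → Prop
  | S, .base a => sat0 S a
  | S, .neg f => ¬ satL Cxt S f
  | S, .conj f g => satL Cxt S f ∧ satL Cxt S g
  | S, .box i f => ∀ S' ∈ Cxt, epRel i S S' → satL Cxt S' f
  | S, .boxo i f => ∀ S' ∈ Cxt, ¬ epRel i S S' → satL Cxt S' f

/-- QBF propositional variables: x_{p,k} (left) and x_{△_i α,k} (right), each of level k. -/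
abbrev QV (Atm Agt : Type) : Type := (Atm ⊕ (Agt × L0 Atm Agt)) × ℕ

/-- Truth value a state assigns to the base part of a variable. -/
def baseVal (S : State Atm Agt) : (Atm ⊕ (Agt × L0 Atm Agt)) → Prop
  | .inl p => p ∈ S.V
  | .inr (i, a) => a ∈ S.B i

/-- The valuation val_S(X_k): x_{△_i α,k} true iff α ∈ B_i, x_{p,k} true iff p ∈ V
(variables of other levels are false). -/
def valAt (S : State Atm Agt) (k : ℕ) : QV Atm Agt → Prop :=
  fun x => x.2 = k ∧ baseVal S x.1

/-- Atoms occurring in an L0 formula. -/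
def atoms0 : L0 Atm Agt → Set Atm
  | .atom p => {p}
  | .neg a => atoms0 a
  | .conj a b => atoms0 a ∪ atoms0 b
  | .bel _ a => atoms0 a

/-- Atoms occurring in an L formula. -/
def atomsL : LFm Atm Agt → Set Atm
  | .base a => atoms0 a
  | .neg f => atomsL f
  | .conj f g => atomsL f ∪ atomsL g
  | .box _ f => atomsL f
  | .boxo _ f => atomsL f

/-- The relevant atoms: those occurring in Γ or in the input formula. -/
def relAtoms (Γ : Agt → Set (L0 Atm Agt)) (f : LFm Atm Agt) : Set Atm :=
  (⋃ i, ⋃ a ∈ Γ i, atoms0 a) ∪ atomsL f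

/-- Whether the base part of a variable is in the vocabulary (Γ, relevant atoms A). -/
def inVocab (Γ : Agt → Set (L0 Atm Agt)) (A : Set Atm) : (Atm ⊕ (Agt × L0 Atm Agt)) → Prop
  | .inl p => p ∈ A
  | .inr (i, a) => a ∈ Γ i

/-- The set X_k of QBF variables of level k. -/
def Xset (Γ : Agt → Set (L0 Atm Agt)) (A : Set Atm) (k : ℕ) : Set (QV Atm Agt) :=
  {x | x.2 = k ∧ inVocab Γ A x.1}

/-- Truth value of tr_k(α) for α ∈ L0 under a valuation v. -/
def tr0 (k : ℕ) (v : QV Atm Agt → Prop) : L0 Atm Agt → Prop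
  | .atom p => v (.inl p, k)
  | .neg a => ¬ tr0 k v a
  | .conj a b => tr0 k v a ∧ tr0 k v b
  | .bel i a => v (.inr (i, a), k)

/-- Truth value of R_{i,k} = ⋀_{α ∈ Γ_i} (x_{△_i α,k} → tr_{k+1}(α)) under a valuation v. -/
def Rform (Γ : Agt → Set (L0 Atm Agt)) (i : Agt) (k : ℕ) (v : QV Atm Agt → Prop) : Prop :=
  ∀ a ∈ Γ i, v (.inr (i, a), k) → tr0 (k + 1) v a

/-- w agrees with v outside the variable set X (semantics of quantifying over X). -/
def agreeOutside (X : Set (QV Atm Agt)) (v w : QV Atm Agt → Prop) : Prop :=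
  ∀ x ∉ X, (w x ↔ v x)

/-- Truth value of the QBF translation tr_k(φ) under a valuation v. -/
def trL (Γ : Agt → Set (L0 Atm Agt)) (A : Set Atm) :
    ℕ → LFm Atm Agt → (QV Atm Agt → Prop) → Prop
  | k, .base a, v => tr0 k v a
  | k, .neg f, v => ¬ trL Γ A k f v
  | k, .conj f g, v => trL Γ A k f v ∧ trL Γ A k g v
  | k, .box i f, v =>
      ∀ w, agreeOutside (Xset Γ A (k + 1)) v w → (Rform Γ i k w → trL Γ A (k + 1) f w)
  | k, .boxo i f, v =>
      ∀ w, agreeOutside (Xset Γ A (k + 1)) v w → (¬ Rform Γ i k w → trL Γ A (k + 1) f w)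

/-- Truth value of desc_{S}(X_0) under a valuation v. -/
def descSem (S : State Atm Agt) (Γ : Agt → Set (L0 Atm Agt)) (A : Set Atm)
    (v : QV Atm Agt → Prop) : Prop :=
  (∀ i, ∀ a ∈ S.B i, v (.inr (i, a), 0)) ∧
  (∀ i, ∀ a ∈ Γ i, a ∉ S.B i → ¬ v (.inr (i, a), 0)) ∧
  (∀ p ∈ A, p ∈ S.V → v (.inl p, 0)) ∧
  (∀ p ∈ A, p ∉ S.V → ¬ v (.inl p, 0))

section AuxProof

variable {Atm Agt : Type}

/-- Variables whose base part is "good": any belief variable, or an atom in A. -/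
def goodB (A : Set Atm) : (Atm ⊕ (Agt × L0 Atm Agt)) → Prop
  | .inl p => p ∈ A
  | .inr _ => True

lemma tr0_congrA {A : Set Atm} {k : ℕ} {v w : QV Atm Agt → Prop}
    (h : ∀ x : QV Atm Agt, x.2 = k → goodB A x.1 → (v x ↔ w x)) :
    ∀ a : L0 Atm Agt, atoms0 a ⊆ A → (tr0 k v a ↔ tr0 k w a) := by
  intro a
  induction a with
  | atom p =>
    intro ha
    exact h (.inl p, k) rfl (ha (by simp [atoms0]))
  | neg a ih =>
    intro ha
    simp only [tr0]
    exact not_congr (ih ha)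
  | conj a b iha ihb =>
    intro ha
    simp only [tr0, atoms0] at *
    exact and_congr (iha (fun x hx => ha (Or.inl hx))) (ihb (fun x hx => ha (Or.inr hx)))
  | bel i a ih =>
    intro _
    exact h (.inr (i, a), k) rfl trivial

/-- The pullback state of a valuation at level m. -/
def pullState (w : QV Atm Agt → Prop) (m : ℕ) : State Atm Agt :=
  ⟨fun j => {a | w (.inr (j, a), m)}, {p | w (.inl p, m)}⟩

lemma sat0_pullState (w : QV Atm Agt → Prop) (m : ℕ) :
    ∀ a : L0 Atm Agt, sat0 (pullState w m) a ↔ tr0 m w a := by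
  intro a
  induction a with
  | atom p => simp [sat0, tr0, pullState]
  | neg a ih => simp only [sat0, tr0]; exact not_congr ih
  | conj a b iha ihb => simp only [sat0, tr0]; exact and_congr iha ihb
  | bel i a ih => simp [sat0, tr0, pullState]

/-- The mixed valuation used in the backward direction of the box cases. -/
def mixVal (S : State Atm Agt) (k : ℕ) (Γ : Agt → Set (L0 Atm Agt)) (A : Set Atm)
    (S' : State Atm Agt) : QV Atm Agt → Prop :=
  fun x => valAt S k x ∨ (x ∈ Xset Γ A (k + 1) ∧ baseVal S' x.1)

lemma agreeOutside_mixVal (S : State Atm Agt) (k : ℕ) (Γ : Agt → Set (L0 Atm Agt))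
    (A : Set Atm) (S' : State Atm Agt) :
    agreeOutside (Xset Γ A (k + 1)) (valAt S k) (mixVal S k Γ A S') := by
  intro x hx
  simp only [mixVal]
  exact or_iff_left (fun h => hx h.1)

lemma tr0_mixVal {S : State Atm Agt} {k : ℕ} {Γ : Agt → Set (L0 Atm Agt)} {A : Set Atm}
    {S' : State Atm Agt} (hS' : S' ∈ SGamma Γ) :
    ∀ a : L0 Atm Agt, atoms0 a ⊆ A → (tr0 (k + 1) (mixVal S k Γ A S') a ↔ sat0 S' a) := by
  intro a
  induction a with
  | atom p =>
    intro ha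
    have hpA : p ∈ A := ha (by simp [atoms0])
    simp only [tr0, sat0, mixVal, valAt, Xset, Set.mem_setOf_eq, inVocab, baseVal]
    constructor
    · rintro (⟨h1, _⟩ | ⟨_, h2⟩)
      · omega
      · exact h2
    · intro h; exact Or.inr ⟨⟨trivial, hpA⟩, h⟩
  | neg a ih =>
    intro ha; simp only [tr0, sat0]; exact not_congr (ih ha)
  | conj a b iha ihb =>
    intro ha
    simp only [atoms0] at ha
    simp only [tr0, sat0]
    exact and_congr (iha (fun x hx => ha (Or.inl hx))) (ihb (fun x hx => ha (Or.inr hx)))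
  | bel j b ih =>
    intro _
    simp only [tr0, sat0, mixVal, valAt, Xset, Set.mem_setOf_eq, inVocab, baseVal]
    constructor
    · rintro (⟨h1, _⟩ | ⟨_, h2⟩)
      · omega
      · exact h2
    · intro h; exact Or.inr ⟨⟨trivial, hS' j h⟩, h⟩

lemma Rform_mixVal {S : State Atm Agt} {k : ℕ} {Γ : Agt → Set (L0 Atm Agt)} {A : Set Atm}
    {S' : State Atm Agt} (hΓA : ∀ i, ∀ a ∈ Γ i, atoms0 a ⊆ A)
    (hS : S ∈ SGamma Γ) (hS' : S' ∈ SGamma Γ) (i : Agt) :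
    Rform Γ i k (mixVal S k Γ A S') ↔ epRel i S S' := by
  constructor
  · intro hR a haB
    have haΓ : a ∈ Γ i := hS i haB
    have hwk : mixVal S k Γ A S' (.inr (i, a), k) := Or.inl ⟨rfl, haB⟩
    exact (tr0_mixVal hS' a (hΓA i a haΓ)).mp (hR a haΓ hwk)
  · intro hRel a haΓ hwk
    have haB : a ∈ S.B i := by
      rcases hwk with ⟨_, h⟩ | ⟨⟨h1, _⟩, _⟩
      · exact h
      · omega
    exact (tr0_mixVal hS' a (hΓA i a haΓ)).mpr (hRel a haB)

lemma agree_mixVal {S : State Atm Agt} {k : ℕ} {Γ : Agt → Set (L0 Atm Agt)} {A : Set Atm}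
    {S' : State Atm Agt} (hS' : S' ∈ SGamma Γ) :
    ∀ x : QV Atm Agt, k + 1 ≤ x.2 → goodB A x.1 →
      (mixVal S k Γ A S' x ↔ valAt S' (k + 1) x) := by
  rintro ⟨b, m⟩ hm hg
  by_cases hme : m = k + 1
  · subst hme
    simp only [mixVal, valAt, Xset, Set.mem_setOf_eq]
    constructor
    · rintro (⟨h1, _⟩ | ⟨_, h2⟩)
      · omega
      · exact ⟨trivial, h2⟩
    · rintro ⟨_, h2⟩
      refine Or.inr ⟨⟨trivial, ?_⟩, h2⟩
      cases b with
      | inl p => exact hg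
      | inr ja =>
        obtain ⟨j, a⟩ := ja
        exact hS' j h2
  · simp only [mixVal, valAt, Xset, Set.mem_setOf_eq]
    constructor
    · rintro (⟨h1, _⟩ | ⟨⟨h1, _⟩, _⟩) <;> omega
    · rintro ⟨h1, _⟩; omega

/-- Key facts for the pullback state in the forward direction. -/
lemma pullState_mem {Γ : Agt → Set (L0 Atm Agt)} {A : Set Atm} {S : State Atm Agt} {k : ℕ}
    {w : QV Atm Agt → Prop} (hw : agreeOutside (Xset Γ A (k + 1)) (valAt S k) w) :
    pullState w (k + 1) ∈ SGamma Γ := by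
  intro j a ha
  by_contra hna
  have hx : ((.inr (j, a), k + 1) : QV Atm Agt) ∉ Xset Γ A (k + 1) := by
    intro hmem
    exact hna hmem.2
  have := (hw _ hx).mp ha
  simp only [valAt] at this
  omega

lemma Rform_pullState {Γ : Agt → Set (L0 Atm Agt)} {A : Set Atm} {S : State Atm Agt} {k : ℕ}
    {w : QV Atm Agt → Prop} (hS : S ∈ SGamma Γ)
    (hw : agreeOutside (Xset Γ A (k + 1)) (valAt S k) w) (i : Agt) :
    Rform Γ i k w ↔ epRel i S (pullState w (k + 1)) := by
  have hlev : ∀ a : L0 Atm Agt, (w (.inr (i, a), k) ↔ a ∈ S.B i) := by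
    intro a
    have hx : ((.inr (i, a), k) : QV Atm Agt) ∉ Xset Γ A (k + 1) := by
      intro hmem; have := hmem.1; omega
    rw [hw _ hx]
    simp [valAt, baseVal]
  constructor
  · intro hR a haB
    exact (sat0_pullState w (k + 1) a).mpr (hR a (hS i haB) ((hlev a).mpr haB))
  · intro hRel a _ hwk
    exact (sat0_pullState w (k + 1) a).mp (hRel a ((hlev a).mp hwk))

lemma agree_pullState {Γ : Agt → Set (L0 Atm Agt)} {A : Set Atm} {S : State Atm Agt} {k : ℕ}
    {w : QV Atm Agt → Prop} (hw : agreeOutside (Xset Γ A (k + 1)) (valAt S k) w) :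
    ∀ x : QV Atm Agt, k + 1 ≤ x.2 →
      (valAt (pullState w (k + 1)) (k + 1) x ↔ w x) := by
  rintro ⟨b, m⟩ hm
  by_cases hme : m = k + 1
  · subst hme
    simp only [valAt, true_and]
    cases b with
    | inl p => simp [baseVal, pullState]
    | inr ja => obtain ⟨j, a⟩ := ja; simp [baseVal, pullState]
  · have hx : ((b, m) : QV Atm Agt) ∉ Xset Γ A (k + 1) := by
      intro hmem; exact hme hmem.1
    rw [hw _ hx]
    simp only [valAt]
    constructor
    · rintro ⟨h1, _⟩; omega
    · rintro ⟨h1, _⟩; omega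

lemma agree_transfer {Γ : Agt → Set (L0 Atm Agt)} {A : Set Atm}
    (hΓA : ∀ i, ∀ a ∈ Γ i, atoms0 a ⊆ A) {k : ℕ} {v1 v2 : QV Atm Agt → Prop}
    (hv : ∀ x : QV Atm Agt, k ≤ x.2 → goodB A x.1 → (v1 x ↔ v2 x))
    {w1 : QV Atm Agt → Prop} (hw1 : agreeOutside (Xset Γ A (k + 1)) v1 w1) :
    ∃ w2 : QV Atm Agt → Prop, agreeOutside (Xset Γ A (k + 1)) v2 w2 ∧
      (∀ x : QV Atm Agt, k + 1 ≤ x.2 → goodB A x.1 → (w1 x ↔ w2 x)) ∧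
      (∀ i, Rform Γ i k w1 ↔ Rform Γ i k w2) := by
  classical
  refine ⟨fun x => if x ∈ Xset Γ A (k + 1) then w1 x else v2 x, ?_, ?_, ?_⟩
  · intro x hx
    simp [hx]
  · intro x hx hg
    by_cases hmem : x ∈ Xset Γ A (k + 1)
    · simp [hmem]
    · simp only [hmem, if_false]
      rw [hw1 x hmem]
      exact hv x (by omega) hg
  · intro i
    have hlev : ∀ a : L0 Atm Agt,
        (w1 (.inr (i, a), k) ↔ (if ((.inr (i, a), k) : QV Atm Agt) ∈ Xset Γ A (k + 1)
          then w1 (.inr (i, a), k) else v2 (.inr (i, a), k))) := by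
      intro a
      have hx : ((.inr (i, a), k) : QV Atm Agt) ∉ Xset Γ A (k + 1) := by
        intro hmem; have := hmem.1; omega
      simp only [hx, if_false]
      rw [hw1 _ hx]
      exact hv _ (le_refl k) trivial
    have htr : ∀ a : L0 Atm Agt, atoms0 a ⊆ A →
        (tr0 (k + 1) w1 a ↔ tr0 (k + 1)
          (fun x => if x ∈ Xset Γ A (k + 1) then w1 x else v2 x) a) := by
      intro a ha
      refine tr0_congrA ?_ a ha
      intro x hx hg
      by_cases hmem : x ∈ Xset Γ A (k + 1)
      · simp [hmem]
      · simp only [hmem, if_false]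
        rw [hw1 x hmem]
        exact hv x (by omega) hg
    constructor
    · intro hR a haΓ hwk
      exact (htr a (hΓA i a haΓ)).mp (hR a haΓ ((hlev a).mpr hwk))
    · intro hR a haΓ hwk
      exact (htr a (hΓA i a haΓ)).mpr (hR a haΓ ((hlev a).mp hwk))

lemma trL_congrA {Γ : Agt → Set (L0 Atm Agt)} {A : Set Atm}
    (hΓA : ∀ i, ∀ a ∈ Γ i, atoms0 a ⊆ A) :
    ∀ (f : LFm Atm Agt), atomsL f ⊆ A → ∀ (k : ℕ) (v w : QV Atm Agt → Prop),
      (∀ x : QV Atm Agt, k ≤ x.2 → goodB A x.1 → (v x ↔ w x)) →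
      (trL Γ A k f v ↔ trL Γ A k f w) := by
  intro f
  induction f with
  | base a =>
    intro ha k v w hvw
    exact tr0_congrA (fun x hx => hvw x (le_of_eq hx.symm)) a ha
  | neg f ih =>
    intro ha k v w hvw
    simp only [trL]
    exact not_congr (ih ha k v w hvw)
  | conj f g ihf ihg =>
    intro ha k v w hvw
    simp only [atomsL] at ha
    simp only [trL]
    exact and_congr (ihf (fun x hx => ha (Or.inl hx)) k v w hvw)
      (ihg (fun x hx => ha (Or.inr hx)) k v w hvw)
  | box i f ih =>
    intro ha k v w hvw
    simp only [trL]
    constructor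
    · intro h w2 hw2 hR2
      obtain ⟨w1, hw1, hagr, hRiff⟩ :=
        agree_transfer hΓA (fun x hx hg => (hvw x hx hg).symm) hw2
      have := h w1 hw1 ((hRiff i).mp hR2)
      exact (ih ha (k + 1) w1 w2 (fun x hx hg => (hagr x hx hg).symm)).mp this
    · intro h w1 hw1 hR1
      obtain ⟨w2, hw2, hagr, hRiff⟩ := agree_transfer hΓA hvw hw1
      have := h w2 hw2 ((hRiff i).mp hR1)
      exact (ih ha (k + 1) w2 w1 (fun x hx hg => (hagr x hx hg).symm)).mp this
  | boxo i f ih =>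
    intro ha k v w hvw
    simp only [trL]
    constructor
    · intro h w2 hw2 hR2
      obtain ⟨w1, hw1, hagr, hRiff⟩ :=
        agree_transfer hΓA (fun x hx hg => (hvw x hx hg).symm) hw2
      have := h w1 hw1 (fun hr => hR2 ((hRiff i).mpr hr))
      exact (ih ha (k + 1) w1 w2 (fun x hx hg => (hagr x hx hg).symm)).mp this
    · intro h w1 hw1 hR1
      obtain ⟨w2, hw2, hagr, hRiff⟩ := agree_transfer hΓA hvw hw1
      have := h w2 hw2 (fun hr => hR1 ((hRiff i).mpr hr))
      exact (ih ha (k + 1) w2 w1 (fun x hx hg => (hagr x hx hg).symm)).mp this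

lemma tr0_valAt (S : State Atm Agt) (k : ℕ) :
    ∀ a : L0 Atm Agt, tr0 k (valAt S k) a ↔ sat0 S a := by
  intro a
  induction a with
  | atom p => simp [tr0, sat0, valAt, baseVal]
  | neg a ih => simp only [tr0, sat0]; exact not_congr ih
  | conj a b iha ihb => simp only [tr0, sat0]; exact and_congr iha ihb
  | bel i a ih => simp [tr0, sat0, valAt, baseVal]

lemma main_lemma {Γ : Agt → Set (L0 Atm Agt)} {A : Set Atm}
    (hΓA : ∀ i, ∀ a ∈ Γ i, atoms0 a ⊆ A) :
    ∀ (φ : LFm Atm Agt), atomsL φ ⊆ A → ∀ (k : ℕ) (S : State Atm Agt), S ∈ SGamma Γ →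
      (satL (SGamma Γ) S φ ↔ trL Γ A k φ (valAt S k)) := by
  intro φ
  induction φ with
  | base a =>
    intro _ k S _
    simp only [satL, trL]
    exact (tr0_valAt S k a).symm
  | neg f ih =>
    intro ha k S hS
    simp only [satL, trL]
    exact not_congr (ih ha k S hS)
  | conj f g ihf ihg =>
    intro ha k S hS
    simp only [atomsL] at ha
    simp only [satL, trL]
    exact and_congr (ihf (fun x hx => ha (Or.inl hx)) k S hS)
      (ihg (fun x hx => ha (Or.inr hx)) k S hS)
  | box i f ih =>
    intro ha k S hS
    have haf : atomsL f ⊆ A := ha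
    simp only [satL, trL]
    constructor
    · intro h w hw hR
      have hS' := pullState_mem (S := S) hw
      have hRel := (Rform_pullState hS hw i).mp hR
      have h1 := (ih haf (k + 1) _ hS').mp (h _ hS' hRel)
      refine (trL_congrA hΓA f haf (k + 1) _ w ?_).mp h1
      intro x hx _
      exact agree_pullState hw x hx
    · intro h S' hS' hRel
      have hag := agreeOutside_mixVal S k Γ A S'
      have hR := (Rform_mixVal (k := k) hΓA hS hS' i).mpr hRel
      have h2 := h _ hag hR
      have h3 := (trL_congrA hΓA f haf (k + 1) _ _ (agree_mixVal (S := S) (k := k) hS')).mp h2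
      exact (ih haf (k + 1) S' hS').mpr h3
  | boxo i f ih =>
    intro ha k S hS
    have haf : atomsL f ⊆ A := ha
    simp only [satL, trL]
    constructor
    · intro h w hw hnR
      have hS' := pullState_mem (S := S) hw
      have hnRel : ¬ epRel i S (pullState w (k + 1)) :=
        fun hRel => hnR ((Rform_pullState hS hw i).mpr hRel)
      have h1 := (ih haf (k + 1) _ hS').mp (h _ hS' hnRel)
      refine (trL_congrA hΓA f haf (k + 1) _ w ?_).mp h1
      intro x hx _
      exact agree_pullState hw x hx
    · intro h S' hS' hnRel
      have hag := agreeOutside_mixVal S k Γ A S'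
      have hnR : ¬ Rform Γ i k (mixVal S k Γ A S') :=
        fun hR => hnRel ((Rform_mixVal (k := k) hΓA hS hS' i).mp hR)
      have h2 := h _ hag hnR
      have h3 := (trL_congrA hΓA f haf (k + 1) _ _ (agree_mixVal (S := S) (k := k) hS')).mp h2
      exact (ih haf (k + 1) S' hS').mpr h3

end AuxProof

/-- For every k, φ, finite vocabulary profile Γ and S ∈ 𝐒_Γ:
(S, 𝐒_Γ) ⊨ φ iff val_S(X_k) satisfies tr_k(φ). -/
theorem stmt_1 {Atm Agt : Type} [Countable Atm] [Infinite Atm] [Fintype Agt]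
    (k : ℕ) (φ : LFm Atm Agt) (Γ : Agt → Set (L0 Atm Agt)) (hΓ : ∀ i, (Γ i).Finite)
    (S : State Atm Agt) (hS : S ∈ SGamma Γ) :
    satL (SGamma Γ) S φ ↔ trL Γ (relAtoms Γ φ) k φ (valAt S k) := by
  refine main_lemma ?_ φ ?_ k S hS
  · intro i a haΓ p hp
    exact Or.inl (Set.mem_iUnion.mpr ⟨i, Set.mem_iUnion₂.mpr ⟨a, haΓ, hp⟩⟩)
  · intro p hp
    exact Or.inr hp
end

section
/- For every agent i, every k ∈ ℕ, every vocabulary profile Γ = (Γ_i)_{i∈Agt} with each Γ_i a finite subset of L0, and all states S, S' ∈ 𝐒_Γ: the combined valuation val_S(X_k) + val_{S'}(X_{k+1}) (taking truth values of variables in X_k from the former and of variables in X_{k+1} from the latter) satisfies the formula R_{i,k} = ⋀_{α ∈ Γ_i}(x_{△_i α,k} → tr_{k+1}(α)) if and only if S R_i S'. -/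
variable {Atm Agt : Type}

lemma tr0_combined {Atm Agt : Type} (S S' : State Atm Agt) (k : ℕ) (a : L0 Atm Agt) :
    tr0 (k + 1) (fun x => valAt S k x ∨ valAt S' (k + 1) x) a ↔ sat0 S' a := by
  induction a with
  | atom p =>
      simp [tr0, sat0, valAt, baseVal, Nat.succ_ne_self]
  | neg a ih => simp [tr0, sat0, ih]
  | conj a b iha ihb => simp [tr0, sat0, iha, ihb]
  | bel i a =>
      simp [tr0, sat0, valAt, baseVal, Nat.succ_ne_self]

/-- The combined valuation val_S(X_k) + val_{S'}(X_{k+1}) satisfies R_{i,k} iff S R_i S'. -/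
theorem stmt_3 {Atm Agt : Type} [Countable Atm] [Infinite Atm] [Fintype Agt]
    (i : Agt) (k : ℕ) (Γ : Agt → Set (L0 Atm Agt)) (hΓ : ∀ j, (Γ j).Finite)
    (S S' : State Atm Agt) (hS : S ∈ SGamma Γ) (hS' : S' ∈ SGamma Γ) :
    Rform Γ i k (fun x => valAt S k x ∨ valAt S' (k + 1) x) ↔ epRel i S S' := by
  constructor
  · intro h a ha
    exact (tr0_combined S S' k a).mp
      (h a (hS i ha) (Or.inl ⟨rfl, ha⟩))
  · intro h a _ hv
    refine (tr0_combined S S' k a).mpr (h a ?_)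
    rcases hv with ⟨_, hb⟩ | ⟨hk, _⟩
    · exact hb
    · exact absurd hk (Nat.succ_ne_self k).symm
end

section
/- For all distinct agents i ≠ j, every α ∈ L0, and every formula φ of L+, the formula [+_i α] □_j φ ↔ □_j φ is valid for the class of models. -/
variable {Atm Agt : Type}

/-- The language L+: L extended with private expansion operators [+_i α]. -/
inductive LpFm (Atm Agt : Type) : Type
  | base : L0 Atm Agt → LpFm Atm Agt
  | neg  : LpFm Atm Agt → LpFm Atm Agt
  | conj : LpFm Atm Agt → LpFm Atm Agt → LpFm Atm Agt
  | box  : Agt → LpFm Atm Agt → LpFm Atm Agt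
  | boxo : Agt → LpFm Atm Agt → LpFm Atm Agt
  | dyn  : Agt → L0 Atm Agt → LpFm Atm Agt → LpFm Atm Agt

/-- S^{+_i α}: the state obtained by adding α to agent i's belief base. -/
def upd [DecidableEq Agt] (S : State Atm Agt) (i : Agt) (a : L0 Atm Agt) : State Atm Agt :=
  ⟨Function.update S.B i (insert a (S.B i)), S.V⟩

/-- Satisfaction of L+-formulas in a model (S, Cxt). -/
def satP [DecidableEq Agt] (Cxt : Set (State Atm Agt)) : State Atm Agt → LpFm Atm Agt → Prop
  | S, .base a => sat0 S a
  | S, .neg f => ¬ satP Cxt S f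
  | S, .conj f g => satP Cxt S f ∧ satP Cxt S g
  | S, .box i f => ∀ S' ∈ Cxt, epRel i S S' → satP Cxt S' f
  | S, .boxo i f => ∀ S' ∈ Cxt, ¬ epRel i S S' → satP Cxt S' f
  | S, .dyn i a f => satP Cxt (upd S i a) f

/-- For i ≠ j, [+_i α] □_j φ ↔ □_j φ is valid for the class of models. -/
theorem stmt_9 {Atm Agt : Type} [Countable Atm] [Infinite Atm] [Fintype Agt] [DecidableEq Agt]
    (i j : Agt) (h : i ≠ j) (a : L0 Atm Agt) (φ : LpFm Atm Agt)
    (S : State Atm Agt) (Cxt : Set (State Atm Agt)) :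
    satP Cxt S (.dyn i a (.box j φ)) ↔ satP Cxt S (.box j φ) := by
  have hB : (upd S i a).B j = S.B j := Function.update_of_ne h.symm _ _
  simp only [satP, epRel, hB]
end

section
/- For every agent i, every α ∈ L0, and every formula φ of L+, the formula [+_i α] □_i φ ↔ □_i (α → φ) is valid for the class of models. -/
variable {Atm Agt : Type}

/-- [+_i α] □_i φ ↔ □_i (α → φ) is valid, where α → φ abbreviates ¬(α ∧ ¬φ). -/
theorem stmt_10 {Atm Agt : Type} [Countable Atm] [Infinite Atm] [Fintype Agt] [DecidableEq Agt]
    (i : Agt) (a : L0 Atm Agt) (φ : LpFm Atm Agt)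
    (S : State Atm Agt) (Cxt : Set (State Atm Agt)) :
    satP Cxt S (.dyn i a (.box i φ)) ↔
      satP Cxt S (.box i (.neg (.conj (.base a) (.neg φ)))) := by
  have hrel : ∀ S' : State Atm Agt, epRel i (upd S i a) S' ↔ (epRel i S S' ∧ sat0 S' a) := by
    intro S'
    constructor
    · intro h
      refine ⟨fun b hb => h b ?_, h a ?_⟩ <;>
        simp [upd, Function.update_self] <;> tauto
    · rintro ⟨h1, h2⟩ b hb
      simp [upd, Function.update_self] at hb
      rcases hb with rfl | hb
      · exact h2
      · exact h1 b hb
  constructor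
  · intro h S' hS' hrel'
    simp only [satP]
    rintro ⟨ha, hnφ⟩
    exact hnφ (h S' hS' ((hrel S').mpr ⟨hrel', ha⟩))
  · intro h S' hS' hrel'
    rcases (hrel S').mp hrel' with ⟨h1, h2⟩
    have := h S' hS' h1
    simp only [satP] at this
    by_contra hc
    exact this ⟨h2, hc⟩
end

section
/- For all distinct agents i ≠ j, every α ∈ L0, and every formula φ of L+, the formula [+_i α] □^o_j φ ↔ □^o_j φ is valid for the class of models. -/
variable {Atm Agt : Type}

/-- For i ≠ j, [+_i α] □^o_j φ ↔ □^o_j φ is valid for the class of models. -/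
theorem stmt_11 {Atm Agt : Type} [Countable Atm] [Infinite Atm] [Fintype Agt] [DecidableEq Agt]
    (i j : Agt) (h : i ≠ j) (a : L0 Atm Agt) (φ : LpFm Atm Agt)
    (S : State Atm Agt) (Cxt : Set (State Atm Agt)) :
    satP Cxt S (.dyn i a (.boxo j φ)) ↔ satP Cxt S (.boxo j φ) := by
  have hB : (upd S i a).B j = S.B j := by
    simp [upd, Function.update_of_ne (Ne.symm h)]
  have hR : ∀ S', epRel j (upd S i a) S' ↔ epRel j S S' := by
    intro S'; unfold epRel; rw [hB]
  simp only [satP]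
  constructor
  · intro H S' hS' hne; exact H S' hS' (fun he => hne ((hR S').mp he))
  · intro H S' hS' hne; exact H S' hS' (fun he => hne ((hR S').mpr he))
end

section
/- For every agent i, every α ∈ L0, and every formula φ of L+, the formula [+_i α] □^o_i φ ↔ (□_i(¬α → φ) ∧ □^o_i φ) is valid for the class of models. -/
variable {Atm Agt : Type}

lemma epRel_upd [DecidableEq Agt] (i : Agt) (a : L0 Atm Agt) (S S' : State Atm Agt) :
    epRel i (upd S i a) S' ↔ (epRel i S S' ∧ sat0 S' a) := by
  simp only [epRel, upd, Function.update_self]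
  constructor
  · intro h
    exact ⟨fun b hb => h b (Set.mem_insert_of_mem _ hb), h a (Set.mem_insert _ _)⟩
  · rintro ⟨h1, h2⟩ b hb
    rcases hb with rfl | hb
    · exact h2
    · exact h1 b hb

/-- [+_i α] □^o_i φ ↔ (□_i(¬α → φ) ∧ □^o_i φ) is valid, where ¬α → φ abbreviates ¬(¬α ∧ ¬φ). -/
theorem stmt_12 {Atm Agt : Type} [Countable Atm] [Infinite Atm] [Fintype Agt] [DecidableEq Agt]
    (i : Agt) (a : L0 Atm Agt) (φ : LpFm Atm Agt)
    (S : State Atm Agt) (Cxt : Set (State Atm Agt)) :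
    satP Cxt S (.dyn i a (.boxo i φ)) ↔
      satP Cxt S (.conj (.box i (.neg (.conj (.base (.neg a)) (.neg φ)))) (.boxo i φ)) := by
  simp only [satP, epRel_upd, sat0]
  constructor
  · intro h
    refine ⟨fun S' hS' hR hc => ?_, fun S' hS' hn => ?_⟩
    · by_contra _
      exact hc.2 (h S' hS' (fun ⟨_, ha⟩ => hc.1 ha))
    · exact h S' hS' (fun ⟨hR, _⟩ => hn hR)
  · rintro ⟨h1, h2⟩ S' hS' hn
    by_cases hR : epRel i S S'
    · by_contra hφ
      by_cases ha : sat0 S' a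
      · exact hn ⟨hR, ha⟩
      · exact h1 S' hS' hR ⟨ha, hφ⟩
    · exact h2 S' hS' hR
end

section
/- Satisfaction in the Γ-universal model depends only on relevant atoms: let Γ = (Γ_i)_{i∈Agt} be a vocabulary profile with each Γ_i a finite subset of L0, let φ be a formula of L, and let A be the set of atomic propositions occurring in some formula of some Γ_i or in φ. If S = ((B_i), V) and T = ((B_i), W) are states in 𝐒_Γ with the same belief bases and with V ∩ A = W ∩ A, then (S, 𝐒_Γ) ⊨ φ if and only if (T, 𝐒_Γ) ⊨ φ. -/
variable {Atm Agt : Type}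

lemma sat0_inv {Atm Agt : Type} (A : Set Atm) (S T : State Atm Agt)
    (hB : S.B = T.B) (hV : S.V ∩ A = T.V ∩ A) :
    ∀ a : L0 Atm Agt, atoms0 a ⊆ A → (sat0 S a ↔ sat0 T a) := by
  intro a
  induction a with
  | atom p =>
      intro h
      have hp : p ∈ A := h rfl
      simp only [sat0]
      constructor
      · intro hv; exact ((hV ▸ Set.mem_inter hv hp) : p ∈ T.V ∩ A).1
      · intro hv; exact ((hV.symm ▸ Set.mem_inter hv hp) : p ∈ S.V ∩ A).1
  | neg a ih => intro h; simp only [sat0]; exact not_congr (ih h)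
  | conj a b iha ihb =>
      intro h
      simp only [sat0]
      exact and_congr (iha (fun x hx => h (Or.inl hx))) (ihb (fun x hx => h (Or.inr hx)))
  | bel i a ih => intro _; simp only [sat0, hB]

lemma satL_inv {Atm Agt : Type} (Γ : Agt → Set (L0 Atm Agt)) (A : Set Atm)
    (hA : ∀ i, ∀ a ∈ Γ i, atoms0 a ⊆ A) :
    ∀ (φ : LFm Atm Agt), atomsL φ ⊆ A →
    ∀ (S T : State Atm Agt), S.B = T.B → S.V ∩ A = T.V ∩ A →
    (satL (SGamma Γ) S φ ↔ satL (SGamma Γ) T φ) := by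
  intro φ
  induction φ with
  | base a => intro h S T hB hV; exact sat0_inv A S T hB hV a h
  | neg f ih => intro h S T hB hV; exact not_congr (ih h S T hB hV)
  | conj f g ihf ihg =>
      intro h S T hB hV
      exact and_congr (ihf (fun x hx => h (Or.inl hx)) S T hB hV)
        (ihg (fun x hx => h (Or.inr hx)) S T hB hV)
  | box i f ih =>
      intro h S T hB hV
      have hrel : ∀ S', epRel i S S' ↔ epRel i T S' := by
        intro S'; unfold epRel; rw [hB]
      simp only [satL]
      exact forall₂_congr (fun S' _ => imp_congr (hrel S') Iff.rfl)
  | boxo i f ih =>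
      intro h S T hB hV
      have hrel : ∀ S', epRel i S S' ↔ epRel i T S' := by
        intro S'; unfold epRel; rw [hB]
      simp only [satL]
      exact forall₂_congr (fun S' _ => imp_congr (not_congr (hrel S')) Iff.rfl)

/-- Satisfaction in the Γ-universal model depends only on the relevant atoms: if two states
of 𝐒_Γ have the same belief bases and their valuations agree on the atoms occurring in Γ
or in φ, then they satisfy φ alike. -/
theorem stmt_18 {Atm Agt : Type} [Countable Atm] [Infinite Atm] [Fintype Agt]
    (Γ : Agt → Set (L0 Atm Agt)) (hΓ : ∀ i, (Γ i).Finite) (φ : LFm Atm Agt)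
    (S T : State Atm Agt) (hS : S ∈ SGamma Γ) (hT : T ∈ SGamma Γ)
    (hB : S.B = T.B) (hV : S.V ∩ relAtoms Γ φ = T.V ∩ relAtoms Γ φ) :
    satL (SGamma Γ) S φ ↔ satL (SGamma Γ) T φ := by
  apply satL_inv Γ (relAtoms Γ φ) _ φ _ S T hB hV
  · intro i a ha x hx
    exact Or.inl (Set.mem_iUnion.2 ⟨i, Set.mem_iUnion₂.2 ⟨a, ha, hx⟩⟩)
  · intro x hx; exact Or.inr hx
end
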